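/- Let B = [b_1,...,b_n] be an invertible matrix in R^{n×n} whose Gram–Schmidt coefficients satisfy |μ_{j,i}| ≤ 1/2 for all j < i, with Gram–Schmidt vectors b_1^*,...,b_n^*. For any target t ∈ R^n, let v = B⌊B^{-1}t⌉ be the Babai rounding output (coordinatewise nearest-integer rounding). Then ‖t - v‖ ≤ (1/2) √( Σ_{j=1}^n (1 + (n-j)/2)² ‖b_j^*‖² ). -/

import Mathlib

/-! The rounding error is `t - v = ∑ εᵢ bᵢ` with `|εᵢ| ≤ 1/2`. Expanding each `bᵢ` in the
Gram–Schmidt basis, the coefficient of `b*ⱼ` becomes `εⱼ + ∑_{i > j} μⱼᵢ εᵢ`, which size-reducedness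
bounds by `(1/2)(1 + (n - 1 - j)/2)`; Pythagoras over the orthogonal `b*ⱼ` then gives the bound. -/

open Finset

/-- Gram–Schmidt orthogonalization of a family of vectors in `EuclideanSpace ℝ (Fin n)`. -/
noncomputable def gramSchmidtFin (n : ℕ) (b : Fin n → EuclideanSpace ℝ (Fin n)) :
    Fin n → EuclideanSpace ℝ (Fin n) :=
  @InnerProductSpace.gramSchmidt ℝ _ _ _ _ (Fin n) _ _ (inferInstanceAs (WellFoundedLT (Fin n))) b

open scoped Matrix

theorem gramSchmidtFin_eq (n : ℕ) (b : Fin n → EuclideanSpace ℝ (Fin n)) :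
    gramSchmidtFin n b = InnerProductSpace.gramSchmidt ℝ b :=
  rfl

section Orthogonal

variable {ι E : Type*} [NormedAddCommGroup E] [InnerProductSpace ℝ E]

theorem norm_sum_smul_sq_of_pairwise_inner_eq_zero {e : ι → E}
    (he : Pairwise fun i j => inner ℝ (e i) (e j) = 0) (s : Finset ι) (c : ι → ℝ) :
    ‖∑ i ∈ s, c i • e i‖ ^ 2 = ∑ i ∈ s, c i ^ 2 * ‖e i‖ ^ 2 := by
  classical
  rw [← real_inner_self_eq_norm_sq, sum_inner]
  refine sum_congr rfl fun i hi => ?_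
  rw [inner_sum, sum_eq_single_of_mem i hi fun j _ hji => by
    rw [real_inner_smul_left, real_inner_smul_right, he hji.symm, mul_zero, mul_zero]]
  rw [real_inner_smul_left, real_inner_smul_right, real_inner_self_eq_norm_sq]
  ring

theorem norm_sum_smul_le_sqrt_of_pairwise_inner_eq_zero {e : ι → E}
    (he : Pairwise fun i j => inner ℝ (e i) (e j) = 0) (s : Finset ι) {c C : ι → ℝ}
    (hc : ∀ i ∈ s, |c i| ≤ C i) :
    ‖∑ i ∈ s, c i • e i‖ ≤ √(∑ i ∈ s, C i ^ 2 * ‖e i‖ ^ 2) := by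
  rw [← Real.sqrt_sq (norm_nonneg _), norm_sum_smul_sq_of_pairwise_inner_eq_zero he]
  refine Real.sqrt_le_sqrt (sum_le_sum fun i hi => ?_)
  have hci := abs_le.mp (hc i hi)
  exact mul_le_mul_of_nonneg_right (sq_le_sq' hci.1 hci.2) (sq_nonneg _)

end Orthogonal

section Unitriangular

variable {ι R M : Type*} [Fintype ι] [LinearOrder ι] [LocallyFiniteOrderBot ι]
  [LocallyFiniteOrderTop ι] [CommRing R] [AddCommGroup M] [Module R M]

theorem sum_smul_eq_sum_smul_of_unitriangular {b e : ι → M} {μ : ι → ι → R}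
    (hb : ∀ i, b i = e i + ∑ j ∈ Iio i, μ j i • e j) (x : ι → R) :
    ∑ i, x i • b i = ∑ j, (x j + ∑ i ∈ Ioi j, μ j i * x i) • e j := by
  have hswap : ∑ i, ∑ j ∈ Iio i, (μ j i * x i) • e j
      = ∑ j, ∑ i ∈ Ioi j, (μ j i * x i) • e j :=
    sum_comm' fun i j => by simp
  simp only [hb, smul_add, smul_sum, smul_smul, sum_add_distrib, add_smul, sum_smul,
    mul_comm (x _)]
  rw [hswap]

end Unitriangular

theorem abs_add_sum_mul_le {ι : Type*} [Preorder ι] [LocallyFiniteOrderTop ι]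
    {x : ι → ℝ} {μ : ι → ι → ℝ} {δ m : ℝ} (hx : ∀ i, |x i| ≤ δ) (hμ : ∀ j i, j < i → |μ j i| ≤ m)
    (j : ι) :
    |x j + ∑ i ∈ Ioi j, μ j i * x i| ≤ δ * (1 + m * #(Ioi j)) := by
  have hm : ∀ i ∈ Ioi j, |μ j i * x i| ≤ m * δ := fun i hi => by
    rw [abs_mul]
    exact mul_le_mul (hμ j i (mem_Ioi.mp hi)) (hx i) (abs_nonneg _)
      ((abs_nonneg _).trans (hμ j i (mem_Ioi.mp hi)))
  calc |x j + ∑ i ∈ Ioi j, μ j i * x i|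
      ≤ |x j| + ∑ i ∈ Ioi j, |μ j i * x i| :=
        (abs_add_le _ _).trans (add_le_add le_rfl (abs_sum_le_sum_abs _ _))
    _ ≤ δ + #(Ioi j) • (m * δ) := add_le_add (hx j) (sum_le_card_nsmul _ _ _ hm)
    _ = δ * (1 + m * #(Ioi j)) := by rw [nsmul_eq_mul]; ring

theorem sub_mulVec_round_inv_mulVec {n : Type*} [Fintype n] [DecidableEq n]
    (B : Matrix n n ℝ) (hB : IsUnit B.det) (t : n → ℝ) :
    t - B *ᵥ (fun i => (round ((B⁻¹ *ᵥ t) i) : ℝ))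
      = B *ᵥ (fun i => (B⁻¹ *ᵥ t) i - round ((B⁻¹ *ᵥ t) i)) := by
  change _ = B *ᵥ (B⁻¹ *ᵥ t - fun i => _)
  rw [Matrix.mulVec_sub, Matrix.mulVec_mulVec, Matrix.mul_nonsing_inv _ hB, Matrix.one_mulVec]

theorem toLp_mulVec_eq_sum_smul {m n : Type*} [Fintype m] [Fintype n] (B : Matrix m n ℝ)
    {b : n → EuclideanSpace ℝ m} (hb : ∀ i k, b i k = B k i) (x : n → ℝ) :
    WithLp.toLp 2 (B *ᵥ x) = ∑ i, x i • b i := by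
  ext k
  simp [Matrix.mulVec, dotProduct, hb, mul_comm]

theorem babai_rounding_error_bound_size_reduced
    (n : ℕ) (B : Matrix (Fin n) (Fin n) ℝ) (hB : IsUnit B.det)
    (b : Fin n → EuclideanSpace ℝ (Fin n)) (hbcol : ∀ i k, b i k = B k i)
    (bstar : Fin n → EuclideanSpace ℝ (Fin n)) (hbstar : bstar = gramSchmidtFin n b)
    (μ : Fin n → Fin n → ℝ)
    (hμdef : ∀ j i, μ j i = (inner ℝ (b i) (bstar j) : ℝ) / ‖bstar j‖ ^ 2)
    (hμ : ∀ j i : Fin n, j < i → |μ j i| ≤ 1 / 2)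
    (t : Fin n → ℝ)
    (v : Fin n → ℝ) (hv : v = B.mulVec (fun i => (round (B⁻¹.mulVec t i) : ℝ))) :
    ‖(WithLp.equiv 2 (Fin n → ℝ)).symm (t - v)‖ ≤
      (1 / 2) * Real.sqrt (∑ j : Fin n,
        (1 + ((n - 1 - (j : ℕ) : ℕ) : ℝ) / 2) ^ 2 * ‖bstar j‖ ^ 2) := by
  set x := B⁻¹ *ᵥ t
  have hres : (WithLp.equiv 2 (Fin n → ℝ)).symm (t - v) = ∑ i, (x i - round (x i)) • b i := by
    rw [WithLp.equiv_symm_apply, hv, sub_mulVec_round_inv_mulVec B hB,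
      toLp_mulVec_eq_sum_smul B hbcol]
  have hgs : ∀ i, b i = bstar i + ∑ j ∈ Iio i, μ j i • bstar j := fun i => by
    simpa [hbstar, gramSchmidtFin_eq, hμdef, real_inner_comm]
      using InnerProductSpace.gramSchmidt_def'' ℝ b i
  have horth : Pairwise fun i j => inner ℝ (bstar i) (bstar j) = 0 :=
    hbstar ▸ InnerProductSpace.gramSchmidt_pairwise_orthogonal ℝ b
  have hcoef : ∀ j, |x j - round (x j) + ∑ i ∈ Ioi j, μ j i * (x i - round (x i))|
      ≤ 1 / 2 * (1 + ((n - 1 - (j : ℕ) : ℕ) : ℝ) / 2) := fun j =>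
    (abs_add_sum_mul_le (fun i => abs_sub_round (x i)) hμ j).trans_eq (by rw [Fin.card_Ioi]; ring)
  rw [hres, sum_smul_eq_sum_smul_of_unitriangular hgs]
  calc _ ≤ √(∑ j : Fin n, (1 / 2 * (1 + ((n - 1 - (j : ℕ) : ℕ) : ℝ) / 2)) ^ 2 * ‖bstar j‖ ^ 2) :=
        norm_sum_smul_le_sqrt_of_pairwise_inner_eq_zero horth _ fun j _ => hcoef j
    _ = _ := by
        simp_rw [mul_pow, mul_assoc, ← mul_sum]
        rw [Real.sqrt_mul (by norm_num), Real.sqrt_sq (by norm_num)]
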